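/- For any game (X, λ_w, p, G, v_q, v_u, ω) satisfying Assumption 1, any group i, any within-group decision policy d(i), and any likelihood value l_m, the conditional acceptance probability given likelihood value l_m is the same whether computed under the q-class or the u-class conditional distribution: Σ_{x: l(x)=l_m} p(x|i,q)·d(i,x) / Σ_{x: l(x)=l_m} p(x|i,q) = Σ_{x: l(x)=l_m} p(x|i,u)·d(i,x) / Σ_{x: l(x)=l_m} p(x|i,u). Consequently, the quantity d(i|l_m) := Σ_{x: l(x)=l_m} (G(c̄(i))p(x|i,q) + (1−G(c̄(i)))p(x|i,u))d(i,x) / Σ_{x: l(x)=l_m} (G(c̄(i))p(x|i,q) + (1−G(c̄(i)))p(x|i,u)) does not depend on the cost threshold c̄(i). -/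

import Mathlib

/-!
Formalization of the Coate–Loury statistical discrimination model with
machine-learning (contractible) beliefs, following Zhu,
"The Impact of Equal Opportunity on Statistical Discrimination".
-/

open scoped BigOperators
open MeasureTheory

noncomputable section

attribute [local instance] Classical.propDecidable

/-- Group identities `I = {w, b}`. -/
inductive GrpI
  | w
  | b
deriving DecidableEq

instance instFintypeGrpI : Fintype GrpI :=
  ⟨{GrpI.w, GrpI.b}, fun x => by cases x <;> simp⟩

/-- Classes `Y = {q, u}` (qualified / unqualified). -/
inductive Cls
  | q
  | u
deriving DecidableEq

instance instFintypeCls : Fintype Cls :=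
  ⟨{Cls.q, Cls.u}, fun x => by cases x <;> simp⟩

/-- A game `(X, λ_w, p, G, v_q, v_u, ω)` of the Coate–Loury model.  The set of
other features is the finite product `X = X_1 × ⋯ × X_N`, encoded as the pi type
`(j : Fin N) → Xs j`.  The statistical model (Assumption 1) is encoded through a
nonempty subset `Ysub ⊆ {1, …, N}` together with the factorization
`p(x | i, y) = pY(x_𝒴 | y) · pC(x_{-𝒴} | i, x_𝒴)`.  The cost distribution is
given by an everywhere positive density `g` with `∫ g = 1` and `∫ |c| g(c) dc < ∞`. -/
structure Game (N : ℕ) (Xs : Fin N → Type) [∀ j, Fintype (Xs j)]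
    [∀ j, Nonempty (Xs j)] where
  lamw : ℝ
  lamw_pos : 0 < lamw
  lamw_lt_one : lamw < 1
  Ysub : Finset (Fin N)
  Ysub_nonempty : Ysub.Nonempty
  pY : ((j : Ysub) → Xs j.1) → Cls → ℝ
  pC : GrpI → ((j : Fin N) → Xs j) → ℝ
  pY_pos : ∀ xY y, 0 < pY xY y
  pC_pos : ∀ i x, 0 < pC i x
  pY_sum : ∀ y, ∑ xY, pY xY y = 1
  pC_sum : ∀ (i : GrpI) (xY : (j : Ysub) → Xs j.1),
    ∑ x ∈ Finset.univ.filter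
        (fun x : (j : Fin N) → Xs j => (fun j : Ysub => x j.1) = xY),
      pC i x = 1
  g : ℝ → ℝ
  g_pos : ∀ c, 0 < g c
  g_int : Integrable g
  g_norm : (∫ c, g c) = 1
  g_abs_int : Integrable fun c => |c| * g c
  vq : ℝ
  vu : ℝ
  om : ℝ
  vq_pos : 0 < vq
  vu_pos : 0 < vu
  om_pos : 0 < om

section Policies

variable {N : ℕ} {Xs : Fin N → Type}

/-- A decision policy `d : I × X → [0,1]`. -/
def IsPolicy (d : GrpI → ((j : Fin N) → Xs j) → ℝ) : Prop :=
  ∀ i x, d i x ∈ Set.Icc (0 : ℝ) 1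

/-- A decision policy when data is color-blind, `d_cb : X → [0,1]`. -/
def IsCbPolicy (dcb : ((j : Fin N) → Xs j) → ℝ) : Prop :=
  ∀ x, dcb x ∈ Set.Icc (0 : ℝ) 1

/-- `S ⊆ {1, …, N}` has the dependence property for the belief `f`:
`f` depends on `(i, x)` only up to `(i, x_S)`. -/
def DepProp {I : Type} (f : I → ((j : Fin N) → Xs j) → ℝ)
    (S : Finset (Fin N)) : Prop :=
  ∀ (i : I) (x x' : (j : Fin N) → Xs j), (∀ j ∈ S, x j = x' j) → f i x = f i x'

/-- The minimal subset `Ŷ(f)` with the dependence property. -/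
def minDep {I : Type} (f : I → ((j : Fin N) → Xs j) → ℝ) : Finset (Fin N) :=
  Finset.univ.filter fun j => ∀ S : Finset (Fin N), DepProp f S → j ∈ S

variable [∀ j, Fintype (Xs j)]

/-- Full-support probability distributions on `I × X` (the set `Δ°(I × X)`). -/
def FullSupp (μ : GrpI → ((j : Fin N) → Xs j) → ℝ) : Prop :=
  (∀ i x, 0 < μ i x) ∧ ∑ i, ∑ x, μ i x = 1

/-- Beliefs valued in `(0, 1)`. -/
def OpenBelief (f : GrpI → ((j : Fin N) → Xs j) → ℝ) : Prop :=
  ∀ i x, f i x ∈ Set.Ioo (0 : ℝ) 1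

/-- Acceptance rate of group `i`. -/
def AR (i : GrpI) (d μ : GrpI → ((j : Fin N) → Xs j) → ℝ) : ℝ :=
  (∑ x, d i x * μ i x) / ∑ x, μ i x

/-- True positive rate of group `i`. -/
def TP (i : GrpI) (d μ f : GrpI → ((j : Fin N) → Xs j) → ℝ) : ℝ :=
  (∑ x, d i x * μ i x * f i x) / ∑ x, μ i x * f i x

/-- The equal opportunity control `k(X, μ, f)`. -/
def EOset (μ f : GrpI → ((j : Fin N) → Xs j) → ℝ) :
    Set (GrpI → ((j : Fin N) → Xs j) → ℝ) :=
  {d | IsPolicy d ∧ TP GrpI.w d μ f = TP GrpI.b d μ f}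

/-- The color-blind control: all color-blind decision policies. -/
def CBset : Set (GrpI → ((j : Fin N) → Xs j) → ℝ) :=
  {d | IsPolicy d ∧ ∀ x, d GrpI.w x = d GrpI.b x}

/-- The no proxies control: policies depending on `(i,x)` only through `x_{Ŷ(f)}`. -/
def NoProxies (_μ f : GrpI → ((j : Fin N) → Xs j) → ℝ) :
    Set (GrpI → ((j : Fin N) → Xs j) → ℝ) :=
  {d | IsPolicy d ∧
    ∀ i i' x x', (∀ j ∈ minDep f, x j = x' j) → d i x = d i' x'}

/-- `ℓ²` distance between decision policies. -/
def polDist (d d' : GrpI → ((j : Fin N) → Xs j) → ℝ) : ℝ :=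
  Real.sqrt (∑ i, ∑ x, (d i x - d' i x) ^ 2)

/-- `ℓ²` distance between pairs `(μ, f)`. -/
def pairDist (μ f μ' f' : GrpI → ((j : Fin N) → Xs j) → ℝ) : ℝ :=
  Real.sqrt ((∑ i, ∑ x, (μ i x - μ' i x) ^ 2) + ∑ i, ∑ x, (f i x - f' i x) ^ 2)

/-- `ℓ²` distance between strategy profiles `(c̄, d)`. -/
def profDist (c : GrpI → ℝ) (d : GrpI → ((j : Fin N) → Xs j) → ℝ)
    (c' : GrpI → ℝ) (d' : GrpI → ((j : Fin N) → Xs j) → ℝ) : ℝ :=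
  Real.sqrt ((∑ i, (c i - c' i) ^ 2) + ∑ i, ∑ x, (d i x - d' i x) ^ 2)

end Policies

/-- Upper hemicontinuity of a correspondence on a set. -/
def UpperHemicontinuousOnCorr {α β : Type*} [TopologicalSpace α] [TopologicalSpace β]
    (F : α → Set β) (S : Set α) : Prop :=
  ∀ a ∈ S, ∀ V : Set β, IsOpen V → F a ⊆ V → ∀ᶠ a' in nhdsWithin a S, F a' ⊆ V

/-- Lower hemicontinuity of a correspondence on a set. -/
def LowerHemicontinuousOnCorr {α β : Type*} [TopologicalSpace α] [TopologicalSpace β]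
    (F : α → Set β) (S : Set α) : Prop :=
  ∀ a ∈ S, ∀ V : Set β, IsOpen V → (F a ∩ V).Nonempty →
    ∀ᶠ a' in nhdsWithin a S, (F a' ∩ V).Nonempty

namespace Game

variable {N : ℕ} {Xs : Fin N → Type} [∀ j, Fintype (Xs j)] [∀ j, Nonempty (Xs j)]
variable (Γ : Game N Xs)

/-- Projection `x ↦ x_𝒴`. -/
def proj (x : (j : Fin N) → Xs j) : (j : Γ.Ysub) → Xs j.1 := fun j => x j.1

/-- `p(x | i, y) = p(x_𝒴 | y) · p(x_{-𝒴} | i, x_𝒴)`. -/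
def p (i : GrpI) (x : (j : Fin N) → Xs j) (y : Cls) : ℝ :=
  Γ.pY (Γ.proj x) y * Γ.pC i x

/-- Group probabilities `λ_w`, `λ_b = 1 - λ_w`. -/
def lam : GrpI → ℝ := fun i =>
  match i with
  | GrpI.w => Γ.lamw
  | GrpI.b => 1 - Γ.lamw

/-- The CDF `G` of the cost distribution. -/
def G (c : ℝ) : ℝ := ∫ t in Set.Iic c, Γ.g t

/-- The likelihood function `l(x) = p(x_𝒴 | q) / p(x_𝒴 | u)`. -/
def lhd (x : (j : Fin N) → Xs j) : ℝ :=
  Γ.pY (Γ.proj x) Cls.q / Γ.pY (Γ.proj x) Cls.u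

/-- The likelihood function on `X_𝒴`. -/
def lhdY (xY : (j : Γ.Ysub) → Xs j.1) : ℝ := Γ.pY xY Cls.q / Γ.pY xY Cls.u

/-- The set of likelihood values `{l_1 < … < l_n}`. -/
def LVset : Set ℝ := Set.range Γ.lhd

/-- The assumption that `1` is not a likelihood value
(equivalently, `WW` is single-peaked). -/
def OneNotLV : Prop := (1 : ℝ) ∉ Γ.LVset

/-- The largest likelihood value `l_n`. -/
def lmax : ℝ := sSup Γ.LVset

/-- `⌈ℓ⌉`: the smallest likelihood value `≥ ℓ`. -/
def lceil (ℓ : ℝ) : ℝ := sInf {v | v ∈ Γ.LVset ∧ ℓ ≤ v}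

/-- `⌈ℓ⌉⁻`: the next smallest likelihood value below `⌈ℓ⌉` (or `l_0 = 0`). -/
def lceilm (ℓ : ℝ) : ℝ := sSup (insert 0 {v | v ∈ Γ.LVset ∧ v < Γ.lceil ℓ})

/-- The smallest likelihood value `> ℓ`. -/
def lnext (ℓ : ℝ) : ℝ := sInf {v | v ∈ Γ.LVset ∧ ℓ < v}

/-- The true distribution of features `μ_RE` given cost thresholds `c̄`. -/
def muRE (c : GrpI → ℝ) (i : GrpI) (x : (j : Fin N) → Xs j) : ℝ :=
  Γ.lam i * (Γ.G (c i) * Γ.p i x Cls.q + (1 - Γ.G (c i)) * Γ.p i x Cls.u)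

/-- The true conditional probability (calibrated belief) `f_RE` given `c̄`. -/
def fRE (c : GrpI → ℝ) (i : GrpI) (x : (j : Fin N) → Xs j) : ℝ :=
  Γ.G (c i) * Γ.p i x Cls.q /
    (Γ.G (c i) * Γ.p i x Cls.q + (1 - Γ.G (c i)) * Γ.p i x Cls.u)

/-- Utility `U_i(c̄(i), d(i))` of the representative `i`-applicant. -/
def Uapp (i : GrpI) (ci : ℝ) (di : ((j : Fin N) → Xs j) → ℝ) : ℝ :=
  Γ.om * ∑ x, (Γ.G ci * Γ.p i x Cls.q + (1 - Γ.G ci) * Γ.p i x Cls.u) * di x -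
    ∫ t in Set.Iic ci, t * Γ.g t

/-- Firm utility `U_F(d, μ, f)`. -/
def UF (d μ f : GrpI → ((j : Fin N) → Xs j) → ℝ) : ℝ :=
  ∑ i, ∑ x, d i x * μ i x * (f i x * Γ.vq - (1 - f i x) * Γ.vu)

/-- The color-blind true distribution of features `μ_cb,RE`. -/
def mucbRE (c : GrpI → ℝ) (x : (j : Fin N) → Xs j) : ℝ :=
  Γ.muRE c GrpI.w x + Γ.muRE c GrpI.b x

/-- The color-blind true conditional probability `f_cb,RE`. -/
def fcbRE (c : GrpI → ℝ) (x : (j : Fin N) → Xs j) : ℝ :=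
  (Γ.muRE c GrpI.w x * Γ.fRE c GrpI.w x + Γ.muRE c GrpI.b x * Γ.fRE c GrpI.b x) /
    Γ.mucbRE c x

/-- Firm utility when data is color-blind. -/
def UFcb (dcb μcb fcb : ((j : Fin N) → Xs j) → ℝ) : ℝ :=
  ∑ x, dcb x * μcb x * (fcb x * Γ.vq - (1 - fcb x) * Γ.vu)

/-- `d(i | l_m)`: conditional acceptance probability at likelihood value `lv`. -/
def dcond (i : GrpI) (di : ((j : Fin N) → Xs j) → ℝ) (lv : ℝ) : ℝ :=
  (∑ x ∈ Finset.univ.filter (fun x => Γ.lhd x = lv), Γ.p i x Cls.q * di x) /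
    ∑ x ∈ Finset.univ.filter (fun x => Γ.lhd x = lv), Γ.p i x Cls.q

/-- The within-group policy `d(i)` is associated with the likelihood mixture `ℓ`. -/
def AssociatedWith (i : GrpI) (di : ((j : Fin N) → Xs j) → ℝ) (ℓ : ℝ) : Prop :=
  0 ≤ ℓ ∧ ℓ ≤ Γ.lmax ∧
    ∀ lv ∈ Γ.LVset,
      (Γ.lceil ℓ < lv → Γ.dcond i di lv = 1) ∧
      (lv = Γ.lceil ℓ →
        Γ.dcond i di lv = (Γ.lceil ℓ - ℓ) / (Γ.lceil ℓ - Γ.lceilm ℓ)) ∧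
      (lv < Γ.lceil ℓ → Γ.dcond i di lv = 0)

/-- A decision policy is fair if both within-group policies are associated with
the same likelihood mixture. -/
def Fair (d : GrpI → ((j : Fin N) → Xs j) → ℝ) : Prop :=
  ∃ ℓ, Γ.AssociatedWith GrpI.w (d GrpI.w) ℓ ∧ Γ.AssociatedWith GrpI.b (d GrpI.b) ℓ

/-- `WW(l_m) = ω ∑_{x_𝒴 : l(x_𝒴) > l_m} (p(x_𝒴|q) - p(x_𝒴|u))`. -/
def WWval (t : ℝ) : ℝ :=
  Γ.om * ∑ xY ∈ Finset.univ.filter (fun xY => t < Γ.lhdY xY),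
    (Γ.pY xY Cls.q - Γ.pY xY Cls.u)

/-- The piecewise-linear function `WW` interpolating the points `(l_m, WW(l_m))`. -/
def WW (ℓ : ℝ) : ℝ :=
  if Γ.lceil ℓ = Γ.lceilm ℓ then Γ.WWval (Γ.lceil ℓ)
  else
    (Γ.WWval (Γ.lceilm ℓ) * (Γ.lceil ℓ - ℓ) +
        Γ.WWval (Γ.lceil ℓ) * (ℓ - Γ.lceilm ℓ)) /
      (Γ.lceil ℓ - Γ.lceilm ℓ)

/-- `EĒ(l_m)`: the unique cost with `G(EĒ(l_m)) = 1 / ((v_q/v_u) l_m + 1)`. -/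
def EEbar (lv : ℝ) : ℝ := sInf {cc | 1 / (Γ.vq / Γ.vu * lv + 1) ≤ Γ.G cc}

/-- The correspondence `EE : [0, l_n] ⇒ ℝ`. -/
def EE (ℓ : ℝ) : Set ℝ :=
  if ℓ = 0 then Set.Ici (Γ.EEbar (Γ.lceil 0))
  else if ℓ = Γ.lmax then Set.Iic (Γ.EEbar Γ.lmax)
  else if ℓ ∈ Γ.LVset then Set.Icc (Γ.EEbar (Γ.lnext ℓ)) (Γ.EEbar ℓ)
  else {Γ.EEbar (Γ.lceil ℓ)}

/-- Each representative applicant's cost threshold is a best response to `d`. -/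
def BestResponds (c : GrpI → ℝ) (d : GrpI → ((j : Fin N) → Xs j) → ℝ) : Prop :=
  ∀ (i : GrpI) (c' : ℝ), Γ.Uapp i c' (d i) ≤ Γ.Uapp i (c i) (d i)

/-- An (un-controlled) equilibrium. -/
def IsEquilibrium (c : GrpI → ℝ) (d : GrpI → ((j : Fin N) → Xs j) → ℝ) : Prop :=
  IsPolicy d ∧ Γ.BestResponds c d ∧
    ∀ d', IsPolicy d' →
      Γ.UF d' (Γ.muRE c) (Γ.fRE c) ≤ Γ.UF d (Γ.muRE c) (Γ.fRE c)

/-- A `k`-controlled equilibrium, for the control `(μ, f) ↦ K μ f`. -/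
def IsControlledEq
    (K : (GrpI → ((j : Fin N) → Xs j) → ℝ) → (GrpI → ((j : Fin N) → Xs j) → ℝ) →
      Set (GrpI → ((j : Fin N) → Xs j) → ℝ))
    (c : GrpI → ℝ) (d : GrpI → ((j : Fin N) → Xs j) → ℝ) : Prop :=
  d ∈ K (Γ.muRE c) (Γ.fRE c) ∧ Γ.BestResponds c d ∧
    ∀ d' ∈ K (Γ.muRE c) (Γ.fRE c),
      Γ.UF d' (Γ.muRE c) (Γ.fRE c) ≤ Γ.UF d (Γ.muRE c) (Γ.fRE c)

/-- `𝒮_k(μ, f)`: firm-optimal policies under the control `K` at `(μ, f)`. -/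
def Smax
    (K : (GrpI → ((j : Fin N) → Xs j) → ℝ) → (GrpI → ((j : Fin N) → Xs j) → ℝ) →
      Set (GrpI → ((j : Fin N) → Xs j) → ℝ))
    (μ f : GrpI → ((j : Fin N) → Xs j) → ℝ) :
    Set (GrpI → ((j : Fin N) → Xs j) → ℝ) :=
  {d | d ∈ K μ f ∧ ∀ d' ∈ K μ f, Γ.UF d' μ f ≤ Γ.UF d μ f}

/-- A `k`-controlled `ε`-equilibrium. -/
def IsCtrlEpsEq
    (K : (GrpI → ((j : Fin N) → Xs j) → ℝ) → (GrpI → ((j : Fin N) → Xs j) → ℝ) →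
      Set (GrpI → ((j : Fin N) → Xs j) → ℝ))
    (ε : ℝ) (c : GrpI → ℝ) (d : GrpI → ((j : Fin N) → Xs j) → ℝ) : Prop :=
  ∃ μ f, FullSupp μ ∧ OpenBelief f ∧
    pairDist μ f (Γ.muRE c) (Γ.fRE c) ≤ ε ∧
    Γ.BestResponds c d ∧ d ∈ K μ f ∧ ∀ d' ∈ K μ f, Γ.UF d' μ f ≤ Γ.UF d μ f

/-- Best responses of applicants to a color-blind policy. -/
def BestRespondsCb (c : GrpI → ℝ) (dcb : ((j : Fin N) → Xs j) → ℝ) : Prop :=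
  ∀ (i : GrpI) (c' : ℝ), Γ.Uapp i c' dcb ≤ Γ.Uapp i (c i) dcb

/-- An equilibrium when data is color-blind (unrestricted control). -/
def IsCbEquilibrium (c : GrpI → ℝ) (dcb : ((j : Fin N) → Xs j) → ℝ) : Prop :=
  IsCbPolicy dcb ∧ Γ.BestRespondsCb c dcb ∧
    ∀ dcb', IsCbPolicy dcb' →
      Γ.UFcb dcb' (Γ.mucbRE c) (Γ.fcbRE c) ≤ Γ.UFcb dcb (Γ.mucbRE c) (Γ.fcbRE c)

/-- A `k_cb`-controlled equilibrium when data is color-blind. -/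
def IsCbControlledEq (K : Set (((j : Fin N) → Xs j) → ℝ)) (c : GrpI → ℝ)
    (dcb : ((j : Fin N) → Xs j) → ℝ) : Prop :=
  dcb ∈ K ∧ Γ.BestRespondsCb c dcb ∧
    ∀ dcb' ∈ K,
      Γ.UFcb dcb' (Γ.mucbRE c) (Γ.fcbRE c) ≤ Γ.UFcb dcb (Γ.mucbRE c) (Γ.fcbRE c)

end Game

/-- A control when data is color-blind: for each `X` and each
`(μ_cb, f_cb) ∈ Δ°(X) × (0,1)^X` it specifies a nonempty compact set of
color-blind decision policies. -/
structure CbControl : Type 1 where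
  sets : ∀ (N : ℕ) (Xs : Fin N → Type) [∀ j, Fintype (Xs j)] [∀ j, Nonempty (Xs j)],
    (((j : Fin N) → Xs j) → ℝ) → (((j : Fin N) → Xs j) → ℝ) →
      Set (((j : Fin N) → Xs j) → ℝ)
  nonempty : ∀ (N : ℕ) (Xs : Fin N → Type) [∀ j, Fintype (Xs j)]
    [∀ j, Nonempty (Xs j)] (μ f : ((j : Fin N) → Xs j) → ℝ),
    (∀ x, 0 < μ x) → (∑ x, μ x = 1) → (∀ x, f x ∈ Set.Ioo (0 : ℝ) 1) →
    (sets N Xs μ f).Nonempty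
  compact : ∀ (N : ℕ) (Xs : Fin N → Type) [∀ j, Fintype (Xs j)]
    [∀ j, Nonempty (Xs j)] (μ f : ((j : Fin N) → Xs j) → ℝ),
    (∀ x, 0 < μ x) → (∑ x, μ x = 1) → (∀ x, f x ∈ Set.Ioo (0 : ℝ) 1) →
    IsCompact (sets N Xs μ f)
  mem_policy : ∀ (N : ℕ) (Xs : Fin N → Type) [∀ j, Fintype (Xs j)]
    [∀ j, Nonempty (Xs j)] (μ f : ((j : Fin N) → Xs j) → ℝ),
    (∀ x, 0 < μ x) → (∑ x, μ x = 1) → (∀ x, f x ∈ Set.Ioo (0 : ℝ) 1) →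
    sets N Xs μ f ⊆ {dcb | IsCbPolicy dcb}

/-!
The class enters `p(x | i, y)` only through `p(x_𝒴 | y)`, so `p(x | i, q) = l(x) p(x | i, u)`.
On the fibre `{l = l_m}` the `q`-weights, the `u`-weights and every mixture
`G p(· | i, q) + (1 - G) p(· | i, u)` are therefore proportional, with a positive factor, and a
weighted average is unchanged when its weights are rescaled.
-/

theorem Finset.sum_mul_div_sum_eq_of_forall_eq_mul {ι 𝕜 : Type*} [Field 𝕜] {s : Finset ι}
    {w v d : ι → 𝕜} {k : 𝕜} (hk : k ≠ 0) (h : ∀ x ∈ s, w x = k * v x) :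
    (∑ x ∈ s, w x * d x) / ∑ x ∈ s, w x = (∑ x ∈ s, v x * d x) / ∑ x ∈ s, v x := by
  rw [Finset.sum_congr rfl fun x hx => by rw [h x hx, mul_assoc],
    Finset.sum_congr rfl h, ← Finset.mul_sum, ← Finset.mul_sum, mul_div_mul_left _ _ hk]

namespace Game

variable {N : ℕ} {Xs : Fin N → Type} [∀ j, Fintype (Xs j)] [∀ j, Nonempty (Xs j)]
  (Γ : Game N Xs)

theorem lhd_pos (x : (j : Fin N) → Xs j) : 0 < Γ.lhd x :=
  div_pos (Γ.pY_pos _ _) (Γ.pY_pos _ _)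

theorem p_q_eq_lhd_mul_p_u (i : GrpI) (x : (j : Fin N) → Xs j) :
    Γ.p i x Cls.q = Γ.lhd x * Γ.p i x Cls.u := by
  rw [p, p, lhd, div_mul_eq_mul_div, mul_left_comm, mul_div_cancel_left₀ _ (Γ.pY_pos _ _).ne']

theorem G_nonneg (c : ℝ) : 0 ≤ Γ.G c :=
  setIntegral_nonneg measurableSet_Iic fun t _ => (Γ.g_pos t).le

theorem G_le_one (c : ℝ) : Γ.G c ≤ 1 :=
  Γ.g_norm ▸ setIntegral_le_integral Γ.g_int (.of_forall fun t => (Γ.g_pos t).le)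

theorem mixture_eq_mul_p_u (c : ℝ) (i : GrpI) (x : (j : Fin N) → Xs j) :
    Γ.G c * Γ.p i x Cls.q + (1 - Γ.G c) * Γ.p i x Cls.u =
      (Γ.G c * Γ.lhd x + (1 - Γ.G c)) * Γ.p i x Cls.u := by
  rw [p_q_eq_lhd_mul_p_u]
  ring

theorem G_mul_add_one_sub_G_pos (c : ℝ) {l : ℝ} (hl : 0 < l) : 0 < Γ.G c * l + (1 - Γ.G c) := by
  simpa using convex_Ioi (0 : ℝ) hl (Set.mem_Ioi.2 one_pos) (Γ.G_nonneg c) (sub_nonneg.2 (Γ.G_le_one c))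
    (add_sub_cancel _ _)

end Game

theorem dcond_class_independent_general
    {N : ℕ} {Xs : Fin N → Type} [∀ j, Fintype (Xs j)] [∀ j, Nonempty (Xs j)]
    (Γ : Game N Xs) (i : GrpI) (di : ((j : Fin N) → Xs j) → ℝ)
    (lm : ℝ) (hlm : lm ∈ Γ.LVset) :
    ((∑ x ∈ Finset.univ.filter (fun x => Γ.lhd x = lm), Γ.p i x Cls.q * di x) /
        (∑ x ∈ Finset.univ.filter (fun x => Γ.lhd x = lm), Γ.p i x Cls.q) =
      (∑ x ∈ Finset.univ.filter (fun x => Γ.lhd x = lm), Γ.p i x Cls.u * di x) /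
        (∑ x ∈ Finset.univ.filter (fun x => Γ.lhd x = lm), Γ.p i x Cls.u)) ∧
    ∀ c₁ c₂ : ℝ,
      (∑ x ∈ Finset.univ.filter (fun x => Γ.lhd x = lm),
          (Γ.G c₁ * Γ.p i x Cls.q + (1 - Γ.G c₁) * Γ.p i x Cls.u) * di x) /
        (∑ x ∈ Finset.univ.filter (fun x => Γ.lhd x = lm),
          (Γ.G c₁ * Γ.p i x Cls.q + (1 - Γ.G c₁) * Γ.p i x Cls.u)) =
      (∑ x ∈ Finset.univ.filter (fun x => Γ.lhd x = lm),
          (Γ.G c₂ * Γ.p i x Cls.q + (1 - Γ.G c₂) * Γ.p i x Cls.u) * di x) /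
        (∑ x ∈ Finset.univ.filter (fun x => Γ.lhd x = lm),
          (Γ.G c₂ * Γ.p i x Cls.q + (1 - Γ.G c₂) * Γ.p i x Cls.u)) := by
  obtain ⟨x₀, rfl⟩ := hlm
  have hq : ∀ x ∈ Finset.univ.filter (fun x => Γ.lhd x = Γ.lhd x₀),
      Γ.p i x Cls.q = Γ.lhd x₀ * Γ.p i x Cls.u := fun x hx => by
    rw [Γ.p_q_eq_lhd_mul_p_u, (Finset.mem_filter.1 hx).2]
  have hmix : ∀ c, ∀ x ∈ Finset.univ.filter (fun x => Γ.lhd x = Γ.lhd x₀),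
      Γ.G c * Γ.p i x Cls.q + (1 - Γ.G c) * Γ.p i x Cls.u =
        (Γ.G c * Γ.lhd x₀ + (1 - Γ.G c)) * Γ.p i x Cls.u := fun c x hx => by
    rw [Γ.mixture_eq_mul_p_u, (Finset.mem_filter.1 hx).2]
  have hmix_avg := fun c => Finset.sum_mul_div_sum_eq_of_forall_eq_mul
    (Γ.G_mul_add_one_sub_G_pos c (Γ.lhd_pos x₀)).ne' (d := di) (hmix c)
  exact ⟨Finset.sum_mul_div_sum_eq_of_forall_eq_mul (Γ.lhd_pos x₀).ne' hq,
    fun c₁ c₂ => (hmix_avg c₁).trans (hmix_avg c₂).symm⟩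

/-- The conditional acceptance probability given a likelihood value is the same
whether computed under the `q`-class or the `u`-class conditional distribution;
consequently `d(i | l_m)` does not depend on the cost threshold `c̄(i)`. -/
theorem dcond_class_independent
    {N : ℕ} {Xs : Fin N → Type} [∀ j, Fintype (Xs j)] [∀ j, Nonempty (Xs j)]
    (Γ : Game N Xs) (i : GrpI) (di : ((j : Fin N) → Xs j) → ℝ)
    (hdi : IsCbPolicy di) (lm : ℝ) (hlm : lm ∈ Γ.LVset) :
    ((∑ x ∈ Finset.univ.filter (fun x => Γ.lhd x = lm), Γ.p i x Cls.q * di x) /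
        (∑ x ∈ Finset.univ.filter (fun x => Γ.lhd x = lm), Γ.p i x Cls.q) =
      (∑ x ∈ Finset.univ.filter (fun x => Γ.lhd x = lm), Γ.p i x Cls.u * di x) /
        (∑ x ∈ Finset.univ.filter (fun x => Γ.lhd x = lm), Γ.p i x Cls.u)) ∧
    ∀ c₁ c₂ : ℝ,
      (∑ x ∈ Finset.univ.filter (fun x => Γ.lhd x = lm),
          (Γ.G c₁ * Γ.p i x Cls.q + (1 - Γ.G c₁) * Γ.p i x Cls.u) * di x) /
        (∑ x ∈ Finset.univ.filter (fun x => Γ.lhd x = lm),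
          (Γ.G c₁ * Γ.p i x Cls.q + (1 - Γ.G c₁) * Γ.p i x Cls.u)) =
      (∑ x ∈ Finset.univ.filter (fun x => Γ.lhd x = lm),
          (Γ.G c₂ * Γ.p i x Cls.q + (1 - Γ.G c₂) * Γ.p i x Cls.u) * di x) /
        (∑ x ∈ Finset.univ.filter (fun x => Γ.lhd x = lm),
          (Γ.G c₂ * Γ.p i x Cls.q + (1 - Γ.G c₂) * Γ.p i x Cls.u)) :=
  dcond_class_independent_general Γ i di lm hlm
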